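/- arXiv:1502.07820 — 4 statements merged into one kernel-verified Lean document; each statement's English description precedes it below -/
import Mathlib

section
/- The reduced weighted Laplacian of a tree is invertible and its inverse has path-intersection entries: let T be a finite tree on node set {0,1,...,N} rooted at node 0, with a positive weight g_e > 0 assigned to each edge e, and let H be the N×N reduced weighted graph Laplacian of T obtained by deleting the row and column of the root (i.e., H(a,a) = Σ_{e incident to a} g_e and H(a,b) = −g_{(a,b)} if (a,b) is an edge of T, H(a,b) = 0 otherwise, for non-root nodes a,b). Then H is invertible and for all non-root nodes a, b one has H^{-1}(a,b) = Σ_{e ∈ P(a)∩P(b)} 1/g_e, the sum of the reciprocal edge weights over the edges common to the paths from a to the root and from b to the root. -/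
open Finset
open Classical

/-- A finite rooted tree, encoded by its root and parent map: every node reaches
the root by iterating `parent`, and the root is a fixed point of `parent`.
Each non-root node `v` is identified with the edge `(v, parent v)`, so that
edge weights are functions on non-root nodes. -/
structure DistTree (V : Type) [Fintype V] [DecidableEq V] where
  root : V
  parent : V → V
  parent_root : parent root = root
  reaches_root : ∀ v : V, ∃ n : ℕ, parent^[n] v = root

namespace DistTree

variable {V : Type} [Fintype V] [DecidableEq V]

/-- `a` is a descendant of `b` (i.e. `a ∈ D_b`): `b` lies on the path from `a`
to the root.  Every node is a descendant of itself. -/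
def Desc (T : DistTree V) (a b : V) : Prop := ∃ n : ℕ, T.parent^[n] a = b

/-- `b` is the parent of the (non-root) node `a`: `(a,b)` is an edge of the tree
and `b` lies on the path from `a` to the root. -/
def IsParent (T : DistTree V) (b a : V) : Prop := a ≠ T.root ∧ T.parent a = b

/-- `T.pathSum w a b = Σ_{e ∈ P(a) ∩ P(b)} w_e` : the sum of the edge weights `w`
over the edges common to the path from `a` to the root and the path from `b` to
the root.  An edge `(v, parent v)` (indexed by the non-root node `v`) lies on
`P(a)` iff `a` is a descendant of `v`. -/
noncomputable def pathSum (T : DistTree V) (w : V → ℝ) (a b : V) : ℝ :=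
  ∑ v : V, if v ≠ T.root ∧ T.Desc a v ∧ T.Desc b v then w v else 0

end DistTree

namespace DistTree

variable {V : Type} [Fintype V] [DecidableEq V]

lemma iterate_root (T : DistTree V) (n : ℕ) : T.parent^[n] T.root = T.root := by
  induction n with
  | zero => rfl
  | succ k ih => rw [Function.iterate_succ_apply', ih, T.parent_root]

lemma iterate_eq_root (T : DistTree V) {v : V} {m : ℕ} (h : T.parent^[m] v = T.root)
    {n : ℕ} (hn : m ≤ n) : T.parent^[n] v = T.root := by
  obtain ⟨k, rfl⟩ := Nat.exists_eq_add_of_le hn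
  rw [add_comm, Function.iterate_add_apply, h, T.iterate_root]

lemma no_loop (T : DistTree V) {v : V} (hv : v ≠ T.root) (n : ℕ) :
    T.parent^[n + 1] v ≠ v := by
  intro h
  obtain ⟨m, hm⟩ := T.reaches_root v
  have key : ∀ k : ℕ, T.parent^[k * (n + 1)] v = v := by
    intro k
    induction k with
    | zero => simp
    | succ j ih => rw [Nat.succ_mul, Function.iterate_add_apply, h, ih]
  have hmle : m ≤ m * (n + 1) := by nlinarith
  have := T.iterate_eq_root hm hmle
  rw [key m] at this
  exact hv this

lemma parent_ne (T : DistTree V) {v : V} (hv : v ≠ T.root) : T.parent v ≠ v :=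
  fun h => T.no_loop hv 0 (by simpa using h)

lemma desc_refl (T : DistTree V) (a : V) : T.Desc a a := ⟨0, rfl⟩

lemma desc_root_iff (T : DistTree V) {b : V} : T.Desc T.root b ↔ b = T.root := by
  constructor
  · rintro ⟨n, rfl⟩
    exact T.iterate_root n
  · rintro rfl
    exact T.desc_refl _

lemma desc_iff_of_ne (T : DistTree V) {v b : V} (hvb : v ≠ b) :
    T.Desc v b ↔ T.Desc (T.parent v) b := by
  constructor
  · rintro ⟨n, hn⟩
    cases n with
    | zero => exact absurd hn hvb
    | succ k => exact ⟨k, by rw [← Function.iterate_succ_apply]; exact hn⟩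
  · rintro ⟨n, hn⟩
    exact ⟨n + 1, by rw [Function.iterate_succ_apply]; exact hn⟩

lemma not_desc_parent_self (T : DistTree V) {v : V} (hv : v ≠ T.root) :
    ¬ T.Desc (T.parent v) v := by
  rintro ⟨n, hn⟩
  exact T.no_loop hv n (by rw [Function.iterate_succ_apply]; exact hn)

end DistTree

open Matrix

set_option maxHeartbeats 1600000 in
/-- The reduced weighted Laplacian of a tree (rows/columns of the
root deleted) is invertible, and its inverse has path-intersection entries:
`H⁻¹(a,b) = Σ_{e ∈ P(a) ∩ P(b)} 1/g_e`. -/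
theorem reduced_laplacian_isUnit_and_inv_eq_pathSum {N : ℕ}
    (T : DistTree (Fin (N + 1))) (hroot : T.root = 0)
    (g : Fin (N + 1) → ℝ) (hg : ∀ v, v ≠ T.root → 0 < g v)
    (H : Matrix {v : Fin (N + 1) // v ≠ T.root} {v : Fin (N + 1) // v ≠ T.root} ℝ)
    (hHdiag : ∀ a : {v : Fin (N + 1) // v ≠ T.root},
      H a a = g a.1 + ∑ c : Fin (N + 1),
        (if T.parent c = a.1 ∧ c ≠ T.root then g c else 0))
    (hHoff : ∀ a b : {v : Fin (N + 1) // v ≠ T.root}, a ≠ b →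
      H a b = if T.parent a.1 = b.1 then -g a.1
        else if T.parent b.1 = a.1 then -g b.1 else 0) :
    IsUnit H ∧ ∀ a b : {v : Fin (N + 1) // v ≠ T.root},
      H⁻¹ a b = T.pathSum (fun v => (g v)⁻¹) a.1 b.1 := by
  classical
  set M : Matrix {v : Fin (N + 1) // v ≠ T.root} {v : Fin (N + 1) // v ≠ T.root} ℝ :=
    fun v a => (if v = a then (1 : ℝ) else 0) - (if T.parent v.1 = a.1 then 1 else 0)
    with hMdef
  set B : Matrix {v : Fin (N + 1) // v ≠ T.root} {v : Fin (N + 1) // v ≠ T.root} ℝ :=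
    fun a v => if T.Desc a.1 v.1 then (1 : ℝ) else 0 with hBdef
  set D : Matrix {v : Fin (N + 1) // v ≠ T.root} {v : Fin (N + 1) // v ≠ T.root} ℝ :=
    Matrix.diagonal (fun v => g v.1) with hDdef
  set Gi : Matrix {v : Fin (N + 1) // v ≠ T.root} {v : Fin (N + 1) // v ≠ T.root} ℝ :=
    Matrix.diagonal (fun v => (g v.1)⁻¹) with hGidef
  -- converting sums over all nodes to sums over non-root nodes
  have subty : ∀ F : Fin (N + 1) → ℝ,
      (∑ c : Fin (N + 1), if c ≠ T.root then F c else 0)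
        = ∑ c : {v : Fin (N + 1) // v ≠ T.root}, F c.1 := by
    intro F
    rw [← Finset.sum_filter]
    exact Finset.sum_subtype _ (by simp) F
  -- M * B = 1
  have hMB : M * B = 1 := by
    ext v b
    rw [Matrix.mul_apply, hMdef, hBdef]
    have hsplit : ∀ a : {v : Fin (N + 1) // v ≠ T.root},
        ((if v = a then (1 : ℝ) else 0) - (if T.parent v.1 = a.1 then 1 else 0)) *
          (if T.Desc a.1 b.1 then 1 else 0)
        = (if v = a then (if T.Desc a.1 b.1 then (1 : ℝ) else 0) else 0)
            - (if T.parent v.1 = a.1 then (if T.Desc a.1 b.1 then (1 : ℝ) else 0) else 0) := by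
      intro a; split_ifs <;> ring
    rw [Finset.sum_congr rfl fun a _ => hsplit a, Finset.sum_sub_distrib,
      Finset.sum_ite_eq, if_pos (Finset.mem_univ v)]
    have h2 : (∑ a : {v : Fin (N + 1) // v ≠ T.root},
          if T.parent v.1 = a.1 then (if T.Desc a.1 b.1 then (1 : ℝ) else 0) else 0)
        = if T.Desc (T.parent v.1) b.1 then 1 else 0 := by
      by_cases hp : T.parent v.1 = T.root
      · have hnd : ¬ T.Desc (T.parent v.1) b.1 := by
          rw [hp, T.desc_root_iff]; exact b.2
        rw [if_neg hnd]
        exact Finset.sum_eq_zero fun a _ => if_neg fun h => a.2 (h.symm.trans hp)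
      · rw [Finset.sum_eq_single ⟨T.parent v.1, hp⟩]
        · simp
        · intro a _ ha
          exact if_neg fun h => ha (Subtype.ext h.symm)
        · intro h; exact absurd (Finset.mem_univ _) h
    rw [h2, Matrix.one_apply]
    by_cases hvb : v = b
    · subst hvb
      rw [if_pos (T.desc_refl v.1), if_neg (T.not_desc_parent_self v.2), if_pos rfl]
      ring
    · have hvb' : v.1 ≠ b.1 := fun h => hvb (Subtype.ext h)
      rw [T.desc_iff_of_ne hvb', if_neg hvb]
      ring
  -- H = Mᵀ * D * M
  have hH : H = Mᵀ * D * M := by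
    ext a b
    have entry : (Mᵀ * D * M) a b = ∑ c, M c a * (g c.1 * M c b) := by
      rw [Matrix.mul_assoc, Matrix.mul_apply]
      congr 1; ext c
      rw [Matrix.transpose_apply, hDdef, Matrix.diagonal_mul]
    rw [entry]
    by_cases hab : a = b
    · subst hab
      have hpa : T.parent a.1 ≠ a.1 := T.parent_ne a.2
      have expand : ∀ c : {v : Fin (N + 1) // v ≠ T.root},
          M c a * (g c.1 * M c a)
            = (if c = a then g c.1 else 0) + (if T.parent c.1 = a.1 then g c.1 else 0) := by
        intro c
        simp only [hMdef]
        split_ifs <;> (try ring) <;> (exfalso; subst_vars; tauto)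
      rw [Finset.sum_congr rfl fun c _ => expand c, Finset.sum_add_distrib,
        Finset.sum_ite_eq', if_pos (Finset.mem_univ a), hHdiag a]
      congr 1
      have : (∑ c : Fin (N + 1), if T.parent c = a.1 ∧ c ≠ T.root then g c else 0)
          = ∑ c : Fin (N + 1), if c ≠ T.root then (if T.parent c = a.1 then g c else 0) else 0 := by
        refine Finset.sum_congr rfl fun c _ => ?_
        split_ifs <;> tauto
      rw [this, subty]
    · have hab1 : a.1 ≠ b.1 := fun h => hab (Subtype.ext h)
      have hpa : T.parent a.1 ≠ a.1 := T.parent_ne a.2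
      have hpb : T.parent b.1 ≠ b.1 := T.parent_ne b.2
      have hnotboth : ¬ (T.parent a.1 = b.1 ∧ T.parent b.1 = a.1) := by
        rintro ⟨h1, h2⟩
        refine T.no_loop a.2 1 ?_
        rw [show (1 + 1 : ℕ) = 2 from rfl,
          show T.parent^[2] a.1 = T.parent (T.parent a.1) from rfl, h1, h2]
      have expand : ∀ c : {v : Fin (N + 1) // v ≠ T.root},
          M c a * (g c.1 * M c b)
            = -(if c = a then (if T.parent a.1 = b.1 then g c.1 else 0) else 0)
              - (if c = b then (if T.parent b.1 = a.1 then g c.1 else 0) else 0) := by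
        intro c
        have hccab : ¬ (T.parent c.1 = a.1 ∧ T.parent c.1 = b.1) := by
          rintro ⟨u1, u2⟩; exact hab1 (u1.symm.trans u2)
        simp only [hMdef]
        split_ifs <;> (try ring) <;> (exfalso; subst_vars; tauto)
      rw [Finset.sum_congr rfl fun c _ => expand c, Finset.sum_sub_distrib,
        Finset.sum_neg_distrib, Finset.sum_ite_eq', Finset.sum_ite_eq',
        if_pos (Finset.mem_univ a), if_pos (Finset.mem_univ b), hHoff a b hab]
      split_ifs <;> (try ring) <;> (exfalso; subst_vars; tauto)
  -- D * Gi = 1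
  have hDGi : D * Gi = 1 := by
    have hfun : (fun v : {v : Fin (N + 1) // v ≠ T.root} => g v.1 * (g v.1)⁻¹)
        = fun _ => (1 : ℝ) := by
      funext v
      exact mul_inv_cancel₀ (ne_of_gt (hg v.1 v.2))
    rw [hDdef, hGidef, Matrix.diagonal_mul_diagonal, hfun, Matrix.diagonal_one]
  -- the inverse candidate
  have hBM : B * M = 1 := mul_eq_one_comm.mp hMB
  have hK : H * (B * Gi * Bᵀ) = 1 := by
    rw [hH]
    calc Mᵀ * D * M * (B * Gi * Bᵀ)
        = Mᵀ * D * (M * B) * (Gi * Bᵀ) := by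
          simp only [Matrix.mul_assoc]
      _ = Mᵀ * (D * Gi) * Bᵀ := by
          rw [hMB, Matrix.mul_one]
          simp only [Matrix.mul_assoc]
      _ = (B * M)ᵀ := by
          rw [hDGi, Matrix.mul_one, Matrix.transpose_mul]
      _ = 1 := by rw [hBM, Matrix.transpose_one]
  have hKH : (B * Gi * Bᵀ) * H = 1 := mul_eq_one_comm.mp hK
  have hinv : H⁻¹ = B * Gi * Bᵀ := Matrix.inv_eq_right_inv hK
  refine ⟨⟨⟨H, B * Gi * Bᵀ, hK, hKH⟩, rfl⟩, fun a b => ?_⟩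
  rw [hinv]
  have entry : (B * Gi * Bᵀ) a b = ∑ v, B a v * (g v.1)⁻¹ * B b v := by
    rw [Matrix.mul_apply]
    refine Finset.sum_congr rfl fun v _ => ?_
    rw [Matrix.mul_diagonal, Matrix.transpose_apply]
  rw [entry, DistTree.pathSum]
  have : (∑ v : Fin (N + 1),
        if v ≠ T.root ∧ T.Desc a.1 v ∧ T.Desc b.1 v then (g v)⁻¹ else 0)
      = ∑ v : Fin (N + 1), if v ≠ T.root then
          (if T.Desc a.1 v ∧ T.Desc b.1 v then (g v)⁻¹ else 0) else 0 := by
    refine Finset.sum_congr rfl fun v _ => ?_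
    split_ifs <;> tauto
  rw [this, subty]
  refine Finset.sum_congr rfl fun v _ => ?_
  simp only [hBdef]
  split_ifs <;> (try ring) <;> (exfalso; subst_vars; tauto)
end

section
/- One-hop monotonicity of the voltage-magnitude covariance term: let b be the parent of a non-root node a with edge resistance r_{ab} > 0, and define Ω¹(u,v) := Σ_{c ≠ 0} R(u,c) R(v,c) σp(c) for non-root nodes u, v. Then Ω¹(a,a) − Ω¹(a,b) = r_{ab} Σ_{c ∈ D_a} R(a,c) σp(c) > 0 and Ω¹(a,b) − Ω¹(b,b) = r_{ab} Σ_{c ∈ D_a} R(b,c) σp(c) ≥ 0; consequently Ω¹(a,a) > Ω¹(b,b). -/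
open Finset
open Classical

/-- `Ω¹(u,v) := Σ_{c ≠ 0} R(u,c) R(v,c) σp(c)`, the first term of the covariance of
voltage-magnitude deviations. -/
noncomputable def omega1 {V : Type} [Fintype V] [DecidableEq V]
    (T : DistTree V) (r σp : V → ℝ) (u v : V) : ℝ :=
  ∑ c : V, if c ≠ T.root then T.pathSum r u c * T.pathSum r v c * σp c else 0

section Aux

variable {V : Type} [Fintype V] [DecidableEq V]

lemma DistTree.root_fixed (T : DistTree V) (n : ℕ) : T.parent^[n] T.root = T.root :=
  Function.iterate_fixed T.parent_root n

lemma DistTree.desc_self (T : DistTree V) (a : V) : T.Desc a a := ⟨0, rfl⟩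

lemma DistTree.eq_root_of_desc_root (T : DistTree V) {a : V} (h : T.Desc T.root a) :
    a = T.root := by
  obtain ⟨n, hn⟩ := h
  rw [T.root_fixed] at hn
  exact hn.symm

lemma DistTree.not_desc_parent (T : DistTree V) {a b : V} (hab : T.IsParent b a) :
    ¬ T.Desc b a := by
  rintro ⟨n, hn⟩
  obtain ⟨m, hm⟩ := T.reaches_root a
  have hcyc : T.parent^[n + 1] a = a := by
    rw [Function.iterate_succ_apply, hab.2, hn]
  have hk : ∀ k, T.parent^[(n + 1) * k] a = a := by
    intro k
    induction k with
    | zero => simp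
    | succ k ih =>
        have : (n + 1) * (k + 1) = (n + 1) * k + (n + 1) := by ring
        rw [this, Function.iterate_add_apply, hcyc, ih]
  have hle : m ≤ (n + 1) * m := Nat.le_mul_of_pos_left m (Nat.succ_pos n)
  have : T.parent^[(n + 1) * m] a = T.root := by
    have hsplit : (n + 1) * m = ((n + 1) * m - m) + m := by omega
    rw [hsplit, Function.iterate_add_apply, hm, T.root_fixed]
  exact hab.1 ((hk m).symm.trans this)

lemma DistTree.desc_iff_of_parent (T : DistTree V) {a b : V} (hab : T.IsParent b a) (v : V) :
    T.Desc a v ↔ v = a ∨ T.Desc b v := by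
  constructor
  · rintro ⟨n, hn⟩
    cases n with
    | zero => exact Or.inl hn.symm
    | succ n =>
        right
        rw [Function.iterate_succ_apply, hab.2] at hn
        exact ⟨n, hn⟩
  · rintro (rfl | ⟨n, hn⟩)
    · exact T.desc_self v
    · exact ⟨n + 1, by rw [Function.iterate_succ_apply, hab.2, hn]⟩

lemma DistTree.ne_root_of_desc (T : DistTree V) {a c : V} (ha : a ≠ T.root)
    (h : T.Desc c a) : c ≠ T.root := by
  rintro rfl
  exact ha (T.eq_root_of_desc_root h)

lemma DistTree.pathSum_nonneg (T : DistTree V) {r : V → ℝ}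
    (hr : ∀ v, v ≠ T.root → 0 < r v) (a c : V) : 0 ≤ T.pathSum r a c := by
  refine Finset.sum_nonneg fun v _ => ?_
  split
  · exact le_of_lt (hr v (by tauto))
  · exact le_refl 0

lemma DistTree.pathSum_parent (T : DistTree V) (r : V → ℝ) {a b : V}
    (hab : T.IsParent b a) (c : V) :
    T.pathSum r a c = T.pathSum r b c + (if T.Desc c a then r a else 0) := by
  have hnd := T.not_desc_parent hab
  have hterm : ∀ v : V,
      (if v ≠ T.root ∧ T.Desc a v ∧ T.Desc c v then r v else 0)
        = (if v ≠ T.root ∧ T.Desc b v ∧ T.Desc c v then r v else 0)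
          + (if v = a ∧ T.Desc c a then r v else 0) := by
    intro v
    by_cases hva : v = a
    · subst hva
      by_cases hdc : T.Desc c v
      · simp [hab.1, T.desc_self v, hdc, hnd]
      · simp [hdc]
    · have hd : T.Desc a v ↔ T.Desc b v := by
        rw [T.desc_iff_of_parent hab]
        simp [hva]
      simp [hd, hva]
  unfold DistTree.pathSum
  rw [Finset.sum_congr rfl fun v _ => hterm v, Finset.sum_add_distrib]
  congr 1
  by_cases hdc : T.Desc c a
  · simp only [hdc, and_true, if_pos]
    rw [Finset.sum_ite_eq' Finset.univ a r]
    simp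
  · simp [hdc]

end Aux

/-- One-hop monotonicity of the voltage-magnitude covariance term:
if `b` is the parent of the non-root node `a` with edge resistance `r_{ab} > 0`,
then `Ω¹(a,a) − Ω¹(a,b) = r_{ab} Σ_{c ∈ D_a} R(a,c) σp(c) > 0` and
`Ω¹(a,b) − Ω¹(b,b) = r_{ab} Σ_{c ∈ D_a} R(b,c) σp(c) ≥ 0`; consequently
`Ω¹(a,a) > Ω¹(b,b)`. -/
theorem omega1_one_hop {V : Type} [Fintype V] [DecidableEq V]
    (T : DistTree V) (r σp : V → ℝ)
    (hr : ∀ v, v ≠ T.root → 0 < r v) (hσp : ∀ v, v ≠ T.root → 0 < σp v)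
    (a b : V) (hab : T.IsParent b a) :
    (omega1 T r σp a a - omega1 T r σp a b
        = r a * ∑ c : V, (if T.Desc c a then T.pathSum r a c * σp c else 0)
      ∧ 0 < omega1 T r σp a a - omega1 T r σp a b)
    ∧ (omega1 T r σp a b - omega1 T r σp b b
        = r a * ∑ c : V, (if T.Desc c a then T.pathSum r b c * σp c else 0)
      ∧ 0 ≤ omega1 T r σp a b - omega1 T r σp b b)
    ∧ omega1 T r σp b b < omega1 T r σp a a := by

  obtain ⟨ha, hpa⟩ := hab
  have hab' : T.IsParent b a := ⟨ha, hpa⟩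
  have hkey := T.pathSum_parent r hab'
  have hnra : ¬ T.Desc T.root a := fun h => ha (T.eq_root_of_desc_root h)
  -- first identity
  have e1 : omega1 T r σp a a - omega1 T r σp a b
      = r a * ∑ c : V, (if T.Desc c a then T.pathSum r a c * σp c else 0) := by
    unfold omega1
    rw [← Finset.sum_sub_distrib, Finset.mul_sum]
    refine Finset.sum_congr rfl fun c _ => ?_
    by_cases hc : c ≠ T.root
    · rw [if_pos hc, if_pos hc, hkey c]
      by_cases hdc : T.Desc c a
      · simp only [if_pos hdc]; ring
      · simp only [if_neg hdc]; ring
    · push_neg at hc; subst hc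
      simp [hnra]
  have e2 : omega1 T r σp a b - omega1 T r σp b b
      = r a * ∑ c : V, (if T.Desc c a then T.pathSum r b c * σp c else 0) := by
    unfold omega1
    rw [← Finset.sum_sub_distrib, Finset.mul_sum]
    refine Finset.sum_congr rfl fun c _ => ?_
    by_cases hc : c ≠ T.root
    · rw [if_pos hc, if_pos hc, hkey c]
      by_cases hdc : T.Desc c a
      · simp only [if_pos hdc]; ring
      · simp only [if_neg hdc]; ring
    · push_neg at hc; subst hc
      simp [hnra]
  have hra : 0 < r a := hr a ha
  have hnn1 : ∀ c : V, c ∈ Finset.univ →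
      (0 : ℝ) ≤ (if T.Desc c a then T.pathSum r a c * σp c else 0) := by
    intro c _
    split
    · next h =>
        exact mul_nonneg (T.pathSum_nonneg hr a c)
          (le_of_lt (hσp c (T.ne_root_of_desc ha h)))
    · exact le_refl 0
  have hpos1 : 0 < ∑ c : V, (if T.Desc c a then T.pathSum r a c * σp c else 0) := by
    refine Finset.sum_pos' hnn1 ⟨a, Finset.mem_univ a, ?_⟩
    rw [if_pos (T.desc_self a)]
    have hraa : r a ≤ T.pathSum r a a := by
      have hs := Finset.single_le_sum
        (f := fun v => if v ≠ T.root ∧ T.Desc a v ∧ T.Desc a v then r v else 0)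
        (fun v _ => by
          split
          · exact le_of_lt (hr v (by tauto))
          · exact le_refl 0)
        (Finset.mem_univ a)
      simpa [ha, T.desc_self a, DistTree.pathSum] using hs
    exact mul_pos (lt_of_lt_of_le hra hraa) (hσp a ha)
  have hnn2 : 0 ≤ ∑ c : V, (if T.Desc c a then T.pathSum r b c * σp c else 0) := by
    refine Finset.sum_nonneg fun c _ => ?_
    split
    · next h =>
        exact mul_nonneg (T.pathSum_nonneg hr b c)
          (le_of_lt (hσp c (T.ne_root_of_desc ha h)))
    · exact le_refl 0
  have h1 : 0 < omega1 T r σp a a - omega1 T r σp a b := by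
    rw [e1]; exact mul_pos hra hpos1
  have h2 : 0 ≤ omega1 T r σp a b - omega1 T r σp b b := by
    rw [e2]; exact mul_nonneg (le_of_lt hra) hnn2
  exact ⟨⟨e1, h1⟩, ⟨e2, h2⟩, by linarith⟩
end

section
/- Theorem 1 (variance of voltage-magnitude deviation increases away from the root): if a and b are non-root nodes with a ≠ b and a a descendant of b, then Ω_ε(a) > Ω_ε(b), where Ω_ε(u) := Σ_{c ≠ 0} [R(u,c)² σp(c) + X(u,c)² σq(c) + 2 R(u,c) X(u,c) σpq(c)]. -/
open Finset
open Classical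

namespace DistTree

variable {V : Type} [Fintype V] [DecidableEq V]

lemma desc_trans {T : DistTree V} {a b c : V} (h1 : T.Desc a b) (h2 : T.Desc b c) :
    T.Desc a c := by
  obtain ⟨n, hn⟩ := h1; obtain ⟨m, hm⟩ := h2
  exact ⟨m + n, by rw [Function.iterate_add_apply, hn, hm]⟩

lemma root_fix (T : DistTree V) (k : ℕ) : T.parent^[k] T.root = T.root := by
  induction k with
  | zero => rfl
  | succ k ih => rw [Function.iterate_succ_apply', ih, T.parent_root]

lemma desc_antisymm {T : DistTree V} {a b : V} (ha : a ≠ T.root) (hne : a ≠ b)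
    (h1 : T.Desc a b) : ¬ T.Desc b a := by
  rintro ⟨m, hm⟩
  obtain ⟨n, hn⟩ := h1
  have hn0 : 0 < n := by
    rcases Nat.eq_zero_or_pos n with h | h
    · subst h; exact absurd hn hne
    · exact h
  have hcyc : T.parent^[m + n] a = a := by rw [Function.iterate_add_apply, hn, hm]
  have hiter : ∀ k, T.parent^[k * (m + n)] a = a := by
    intro k; induction k with
    | zero => simp
    | succ k ih => rw [Nat.succ_mul, Function.iterate_add_apply, hcyc, ih]
  obtain ⟨N, hN⟩ := T.reaches_root a
  have hge : N ≤ (N + 1) * (m + n) := by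
    calc N ≤ N + 1 := Nat.le_succ N
    _ ≤ (N + 1) * (m + n) := Nat.le_mul_of_pos_right _ (by omega)
  have h1 := hiter (N + 1)
  rw [← Nat.sub_add_cancel hge, Function.iterate_add_apply, hN, root_fix] at h1
  exact ha h1.symm

lemma pathSum_nonneg_s3 {T : DistTree V} {w : V → ℝ} (hw : ∀ v, v ≠ T.root → 0 < w v)
    (a c : V) : 0 ≤ T.pathSum w a c := by
  apply Finset.sum_nonneg
  intro v _
  split_ifs with h
  · exact (hw v h.1).le
  · exact le_rfl

lemma pathSum_le {T : DistTree V} {w : V → ℝ} (hw : ∀ v, v ≠ T.root → 0 < w v)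
    {a b : V} (h : T.Desc a b) (c : V) : T.pathSum w b c ≤ T.pathSum w a c := by
  apply Finset.sum_le_sum
  intro v _
  by_cases hv : v ≠ T.root ∧ T.Desc b v ∧ T.Desc c v
  · rw [if_pos hv, if_pos ⟨hv.1, desc_trans h hv.2.1, hv.2.2⟩]
  · rw [if_neg hv]
    split_ifs with h2
    · exact (hw v h2.1).le
    · exact le_rfl

lemma pathSum_lt {T : DistTree V} {w : V → ℝ} (hw : ∀ v, v ≠ T.root → 0 < w v)
    {a b : V} (ha : a ≠ T.root) (hne : a ≠ b) (h : T.Desc a b) :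
    T.pathSum w b a < T.pathSum w a a := by
  apply Finset.sum_lt_sum
  · intro v _
    by_cases hv : v ≠ T.root ∧ T.Desc b v ∧ T.Desc a v
    · rw [if_pos hv, if_pos ⟨hv.1, desc_trans h hv.2.1, hv.2.2⟩]
    · rw [if_neg hv]
      split_ifs with h2
      · exact (hw v h2.1).le
      · exact le_rfl
  · refine ⟨a, Finset.mem_univ a, ?_⟩
    rw [if_neg (fun hh => desc_antisymm ha hne h hh.2.1),
      if_pos ⟨ha, desc_refl T a, desc_refl T a⟩]
    exact hw a ha

end DistTree

/-- `Ω_ε(u) := Σ_{c ≠ 0} [R(u,c)² σp(c) + X(u,c)² σq(c) + 2 R(u,c) X(u,c) σpq(c)]`,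
the variance of the voltage-magnitude deviation at node `u` in the LC-PF model. -/
noncomputable def omegaEps {V : Type} [Fintype V] [DecidableEq V]
    (T : DistTree V) (r x σp σq σpq : V → ℝ) (u : V) : ℝ :=
  ∑ c : V, if c ≠ T.root then
      (T.pathSum r u c) ^ 2 * σp c + (T.pathSum x u c) ^ 2 * σq c
        + 2 * T.pathSum r u c * T.pathSum x u c * σpq c
    else 0

/-- **Theorem 1.** The variance of the voltage-magnitude deviation
increases away from the root: if `a` and `b` are non-root nodes with `a ≠ b` and
`a` a descendant of `b`, then `Ω_ε(a) > Ω_ε(b)`. -/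
theorem omegaEps_strict_mono {V : Type} [Fintype V] [DecidableEq V]
    (T : DistTree V) (r x σp σq σpq : V → ℝ)
    (hr : ∀ v, v ≠ T.root → 0 < r v) (hx : ∀ v, v ≠ T.root → 0 < x v)
    (hσp : ∀ v, v ≠ T.root → 0 < σp v) (hσq : ∀ v, v ≠ T.root → 0 < σq v)
    (hσpq : ∀ v, v ≠ T.root → 0 < σpq v)
    (a b : V) (ha : a ≠ T.root) (hb : b ≠ T.root) (hne : a ≠ b)
    (hdesc : T.Desc a b) :
    omegaEps T r x σp σq σpq b < omegaEps T r x σp σq σpq a := by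
  unfold omegaEps
  apply Finset.sum_lt_sum
  · intro c _
    by_cases hc : c ≠ T.root
    · rw [if_pos hc, if_pos hc]
      have hRb := T.pathSum_nonneg_s3 hr b c
      have hXb := T.pathSum_nonneg_s3 hx b c
      have hR := DistTree.pathSum_le hr hdesc c
      have hX := DistTree.pathSum_le hx hdesc c
      have hp := (hσp c hc).le
      have hq := (hσq c hc).le
      have hpq := (hσpq c hc).le
      have h1 := mul_le_mul hR hX hXb (le_trans hRb hR)
      have h2 := pow_le_pow_left₀ hRb hR 2
      have h3 := pow_le_pow_left₀ hXb hX 2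
      nlinarith
    · rw [if_neg hc, if_neg hc]
  · refine ⟨a, Finset.mem_univ a, ?_⟩
    rw [if_pos ha, if_pos ha]
    have hRb := T.pathSum_nonneg_s3 hr b a
    have hXb := T.pathSum_nonneg_s3 hx b a
    have hR := DistTree.pathSum_lt hr ha hne hdesc
    have hX := DistTree.pathSum_lt hx ha hne hdesc
    have hp := hσp a ha
    have hq := hσq a ha
    have hpq := hσpq a ha
    have h1 := mul_lt_mul' hR.le hX hXb (lt_of_le_of_lt hRb hR)
    have h2 := pow_lt_pow_left₀ hR hRb two_ne_zero
    have h3 := pow_le_pow_left₀ hXb hX.le 2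
    nlinarith
end

section
/- Quadratic equation in the squared line resistance (Eq. (13)): let r, x, S_p, S_q, S_pq be real numbers with S_p + S_q ≠ 0, and set A := r² S_p + x² S_q + 2 r x S_pq, B := x² S_p + r² S_q − 2 r x S_pq, and C := r x (S_p − S_q) + (x² − r²) S_pq. Then r⁴ ((A − B)² + 4 C²) + (A + B)² (A S_p − B S_q)² / (S_p + S_q)⁴ = 2 r² · [(A S_p − B S_q)(A² − B²) + 2 C² (A + B)(S_p + S_q)] / (S_p + S_q)². -/
/-- **Eq. (13).** Quadratic equation in the squared line
resistance: with `A`, `B`, `C` the expected squared centered differences of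
voltage-magnitude deviations, phase angles, and their expected product across an
edge with resistance `r` and reactance `x` (Lemma 2), and `S_p`, `S_q`, `S_pq`
the aggregate descendant injection covariances, one has
`r⁴((A−B)² + 4C²) + (A+B)²(A S_p − B S_q)²/(S_p+S_q)⁴
  = 2r² [(A S_p − B S_q)(A² − B²) + 2C²(A+B)(S_p+S_q)]/(S_p+S_q)²`. -/
theorem quadratic_in_squared_resistance (r x Sp Sq Spq : ℝ) (hS : Sp + Sq ≠ 0)
    (A B C : ℝ)
    (hA : A = r ^ 2 * Sp + x ^ 2 * Sq + 2 * r * x * Spq)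
    (hB : B = x ^ 2 * Sp + r ^ 2 * Sq - 2 * r * x * Spq)
    (hC : C = r * x * (Sp - Sq) + (x ^ 2 - r ^ 2) * Spq) :
    r ^ 4 * ((A - B) ^ 2 + 4 * C ^ 2)
      + (A + B) ^ 2 * (A * Sp - B * Sq) ^ 2 / (Sp + Sq) ^ 4 =
    2 * r ^ 2 * ((A * Sp - B * Sq) * (A ^ 2 - B ^ 2)
      + 2 * C ^ 2 * (A + B) * (Sp + Sq)) / (Sp + Sq) ^ 2 := by
  subst hA hB hC
  field_simp
  ring
end
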